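/- arXiv:2207.04726 — 10 statements merged into one kernel-verified Lean document; each statement's English description precedes it below -/
import Mathlib

section
/- For sets X, Y in ℝⁿ and matrices A ∈ ℝ^{n×n}, B ∈ ℝ^{n×m}, E ∈ ℝ^{n×l}, define Pre(X, S, D) = {x | ∃ u, (x,u) ∈ S ∧ ∀ d ∈ D, A x + B u + E d ∈ X}. Then for any sets X₁, X₂ ⊆ ℝⁿ, S₁, S₂ ⊆ ℝ^{n+m}, D₁, D₂ ⊆ ℝˡ, we have Pre(X₁, S₁, D₁) + Pre(X₂, S₂, D₂) ⊆ Pre(X₁ + X₂, S₁ + S₂, D₁ + D₂), where + denotes Minkowski sum. -/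
open Pointwise

/-- One-step backward reachable set for the linear system x⁺ = Ax + Bu + Ed. -/
def Pre {n m l : ℕ} (A : Matrix (Fin n) (Fin n) ℝ) (B : Matrix (Fin n) (Fin m) ℝ)
    (E : Matrix (Fin n) (Fin l) ℝ) (X : Set (Fin n → ℝ))
    (S : Set ((Fin n → ℝ) × (Fin m → ℝ))) (D : Set (Fin l → ℝ)) : Set (Fin n → ℝ) :=
  {x | ∃ u, (x, u) ∈ S ∧ ∀ d ∈ D, A.mulVec x + B.mulVec u + E.mulVec d ∈ X}

theorem pre_superadditive {n m l : ℕ} (A : Matrix (Fin n) (Fin n) ℝ)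
    (B : Matrix (Fin n) (Fin m) ℝ) (E : Matrix (Fin n) (Fin l) ℝ)
    (X₁ X₂ : Set (Fin n → ℝ)) (S₁ S₂ : Set ((Fin n → ℝ) × (Fin m → ℝ)))
    (D₁ D₂ : Set (Fin l → ℝ)) :
    Pre A B E X₁ S₁ D₁ + Pre A B E X₂ S₂ D₂ ⊆
      Pre A B E (X₁ + X₂) (S₁ + S₂) (D₁ + D₂) := by
  rintro x ⟨x₁, ⟨u₁, hS₁, hX₁⟩, x₂, ⟨u₂, hS₂, hX₂⟩, rfl⟩
  refine ⟨u₁ + u₂, ⟨(x₁, u₁), hS₁, (x₂, u₂), hS₂, rfl⟩, ?_⟩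
  rintro d ⟨d₁, hd₁, d₂, hd₂, rfl⟩
  refine ⟨_, hX₁ d₁ hd₁, _, hX₂ d₂ hd₂, ?_⟩
  simp only [Matrix.mulVec_add]
  abel
end

section
/- If X, S, D are convex sets, then for any a ∈ [0,1] and b ∈ [0,1], Pre(a·X, b·S, b·D) + Pre((1−a)·X, (1−b)·S, (1−b)·D) ⊆ Pre(X, S, D). -/
/-! Since the dynamics are linear, states and inputs of two split problems can simply be added,
provided every disturbance splits into a sum of their disturbances, as `d = b • d + (1 - b) • d` does.
Convexity then reassembles the targets and input sets: `a • X + (1 - a) • X ⊆ X`. -/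

open Pointwise

theorem Pre.add_subset {n m l : ℕ} (A : Matrix (Fin n) (Fin n) ℝ)
    (B : Matrix (Fin n) (Fin m) ℝ) (E : Matrix (Fin n) (Fin l) ℝ)
    {X X₁ X₂ : Set (Fin n → ℝ)} {S S₁ S₂ : Set ((Fin n → ℝ) × (Fin m → ℝ))}
    {D D₁ D₂ : Set (Fin l → ℝ)} (hX : X₁ + X₂ ⊆ X) (hS : S₁ + S₂ ⊆ S) (hD : D ⊆ D₁ + D₂) :
    Pre A B E X₁ S₁ D₁ + Pre A B E X₂ S₂ D₂ ⊆ Pre A B E X S D := by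
  rintro _ ⟨x₁, ⟨u₁, hxu₁, hX₁⟩, x₂, ⟨u₂, hxu₂, hX₂⟩, rfl⟩
  refine ⟨u₁ + u₂, hS (Set.add_mem_add hxu₁ hxu₂), fun d hd => ?_⟩
  obtain ⟨d₁, hd₁, d₂, hd₂, rfl⟩ := hD hd
  have hsum := Set.add_mem_add (hX₁ d₁ hd₁) (hX₂ d₂ hd₂)
  convert hX hsum using 1
  simp only [Matrix.mulVec_add]
  abel

theorem Set.subset_smul_add_one_sub_smul {𝕜 E : Type*} [Ring 𝕜] [AddCommGroup E] [Module 𝕜 E]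
    (s : Set E) (b : 𝕜) : s ⊆ b • s + (1 - b) • s := by
  simpa using Set.add_smul_subset b (1 - b) s

theorem pre_convex_decomposition_general {n m l : ℕ} (A : Matrix (Fin n) (Fin n) ℝ)
    (B : Matrix (Fin n) (Fin m) ℝ) (E : Matrix (Fin n) (Fin l) ℝ)
    (X : Set (Fin n → ℝ)) (S : Set ((Fin n → ℝ) × (Fin m → ℝ))) (D : Set (Fin l → ℝ))
    (hX : Convex ℝ X) (hS : Convex ℝ S)
    {a b : ℝ} (ha : a ∈ Set.Icc (0 : ℝ) 1) (hb : b ∈ Set.Icc (0 : ℝ) 1) :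
    Pre A B E (a • X) (b • S) (b • D) +
      Pre A B E ((1 - a) • X) ((1 - b) • S) ((1 - b) • D) ⊆ Pre A B E X S D :=
  Pre.add_subset A B E
    (hX.set_combo_subset ha.1 (sub_nonneg.2 ha.2) (add_sub_cancel a 1))
    (hS.set_combo_subset hb.1 (sub_nonneg.2 hb.2) (add_sub_cancel b 1))
    (D.subset_smul_add_one_sub_smul b)

theorem pre_convex_decomposition {n m l : ℕ} (A : Matrix (Fin n) (Fin n) ℝ)
    (B : Matrix (Fin n) (Fin m) ℝ) (E : Matrix (Fin n) (Fin l) ℝ)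
    (X : Set (Fin n → ℝ)) (S : Set ((Fin n → ℝ) × (Fin m → ℝ))) (D : Set (Fin l → ℝ))
    (hX : Convex ℝ X) (hS : Convex ℝ S) (hD : Convex ℝ D)
    {a b : ℝ} (ha : a ∈ Set.Icc (0 : ℝ) 1) (hb : b ∈ Set.Icc (0 : ℝ) 1) :
    Pre A B E (a • X) (b • S) (b • D) +
      Pre A B E ((1 - a) • X) ((1 - b) • S) ((1 - b) • D) ⊆ Pre A B E X S D :=
  pre_convex_decomposition_general A B E X S D hX hS ha hb
end

section
/- Let X ⊆ ℝⁿ be nonempty, compact and convex, and let S ⊆ ℝ^{n+m} be compact and convex and D ⊆ ℝˡ be nonempty. Then Pre(X, S, D) = {x | ∃ u, (x,u) ∈ S ∧ ∀ d ∈ D, A x + B u + E d ∈ X} is compact and convex. -/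
open Pointwise

theorem pre_isCompact_convex {n m l : ℕ} (A : Matrix (Fin n) (Fin n) ℝ)
    (B : Matrix (Fin n) (Fin m) ℝ) (E : Matrix (Fin n) (Fin l) ℝ)
    (X : Set (Fin n → ℝ)) (S : Set ((Fin n → ℝ) × (Fin m → ℝ))) (D : Set (Fin l → ℝ))
    (hXne : X.Nonempty) (hXcpt : IsCompact X) (hXcvx : Convex ℝ X)
    (hScpt : IsCompact S) (hScvx : Convex ℝ S) (hDne : D.Nonempty) :
    IsCompact (Pre A B E X S D) ∧ Convex ℝ (Pre A B E X S D) := by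
  have hcontA : Continuous (A.mulVec) := A.mulVecLin.continuous_of_finiteDimensional
  have hcontB : Continuous (B.mulVec) := B.mulVecLin.continuous_of_finiteDimensional
  constructor
  · -- compactness: Pre = fst '' (S ∩ closed set)
    have hT : IsCompact {p : (Fin n → ℝ) × (Fin m → ℝ) |
        p ∈ S ∧ ∀ d ∈ D, A.mulVec p.1 + B.mulVec p.2 + E.mulVec d ∈ X} := by
      have heq : {p : (Fin n → ℝ) × (Fin m → ℝ) |
          p ∈ S ∧ ∀ d ∈ D, A.mulVec p.1 + B.mulVec p.2 + E.mulVec d ∈ X}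
          = S ∩ ⋂ d ∈ D,
            (fun p : (Fin n → ℝ) × (Fin m → ℝ) =>
              A.mulVec p.1 + B.mulVec p.2 + E.mulVec d) ⁻¹' X := by
        ext p; simp [Set.mem_iInter]
      rw [heq]
      refine hScpt.inter_right (isClosed_biInter fun d _ => ?_)
      exact hXcpt.isClosed.preimage
        (((hcontA.comp continuous_fst).add (hcontB.comp continuous_snd)).add continuous_const)
    have himg : Pre A B E X S D = Prod.fst '' {p : (Fin n → ℝ) × (Fin m → ℝ) |
        p ∈ S ∧ ∀ d ∈ D, A.mulVec p.1 + B.mulVec p.2 + E.mulVec d ∈ X} := by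
      ext x
      constructor
      · rintro ⟨u, hu, h⟩; exact ⟨(x, u), ⟨hu, h⟩, rfl⟩
      · rintro ⟨⟨x', u⟩, ⟨hu, h⟩, rfl⟩; exact ⟨u, hu, h⟩
    rw [himg]
    exact hT.image continuous_fst
  · -- convexity
    rintro x₁ ⟨u₁, hu₁, h₁⟩ x₂ ⟨u₂, hu₂, h₂⟩ a b ha hb hab
    refine ⟨a • u₁ + b • u₂, ?_, ?_⟩
    · have := hScvx hu₁ hu₂ ha hb hab
      simpa [Prod.smul_mk, Prod.mk_add_mk] using this
    · intro d hd
      have hX := hXcvx (h₁ d hd) (h₂ d hd) ha hb hab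
      have : a • (A.mulVec x₁ + B.mulVec u₁ + E.mulVec d)
          + b • (A.mulVec x₂ + B.mulVec u₂ + E.mulVec d)
          = A.mulVec (a • x₁ + b • x₂) + B.mulVec (a • u₁ + b • u₂) + E.mulVec d := by
        simp only [Matrix.mulVec_add, Matrix.mulVec_smul, smul_add]
        match_scalars <;> linarith
      rw [← this]
      exact hX
end

section
/- Let (Cᵢ)_{i=0}^∞ be an expanding family of nonempty compact convex subsets of ℝⁿ, each with nonempty interior, and let C_∞ = ⋃ᵢ Cᵢ. Then the interior of C_∞ equals the union ⋃ᵢ int(Cᵢ) of the interiors, and moreover int(cl(C_∞)) = int(C_∞). -/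
/-- If `x` lies in an open set `V`, then for some `t > 0` the point
`x + t • (x - y)` is still in `V`. -/
lemma exists_pos_smul_mem {E : Type*} [NormedAddCommGroup E] [NormedSpace ℝ E]
    {V : Set E} (hV : IsOpen V) {x : E} (hx : x ∈ V) (y : E) :
    ∃ t : ℝ, 0 < t ∧ x + t • (x - y) ∈ V := by
  have hcont : Continuous fun t : ℝ => x + t • (x - y) := by
    continuity
  have h0 : (fun t : ℝ => x + t • (x - y)) 0 ∈ V := by simpa using hx
  have hev : ∀ᶠ t in nhds (0 : ℝ), x + t • (x - y) ∈ V :=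
    hcont.continuousAt.eventually_mem (hV.mem_nhds h0)
  have hev' : ∀ᶠ t in nhdsWithin (0 : ℝ) (Set.Ioi 0),
      x + t • (x - y) ∈ V := hev.filter_mono nhdsWithin_le_nhds
  obtain ⟨t, ht, htV⟩ := (hev'.and self_mem_nhdsWithin).exists
  exact ⟨t, htV, ht⟩

/-- If `z = x + t • (x - y)` with `t > 0`, then `x` is a convex combination of
`y` (interior) and `z` (closure), hence in the interior. -/
lemma mem_interior_of_combo {E : Type*} [NormedAddCommGroup E] [NormedSpace ℝ E]
    {s : Set E} (hs : Convex ℝ s) {x y : E} {t : ℝ} (ht : 0 < t)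
    (hy : y ∈ interior s) (hz : x + t • (x - y) ∈ closure s) :
    x ∈ interior s := by
  have h1t : (0 : ℝ) < 1 + t := by linarith
  have key := hs.combo_interior_closure_mem_interior hy hz
    (a := t / (1 + t)) (b := 1 / (1 + t))
    (by positivity) (by positivity) (by field_simp; ring)
  have : (t / (1 + t)) • y + (1 / (1 + t)) • (x + t • (x - y)) = x := by
    rw [smul_add, smul_smul, smul_sub]
    match_scalars <;> field_simp <;> ring
  rwa [this] at key

theorem interior_union_chain {n : ℕ} (C : ℕ → Set (EuclideanSpace ℝ (Fin n)))
    (hmono : Monotone C) (hne : ∀ i, (C i).Nonempty) (hcpt : ∀ i, IsCompact (C i))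
    (hcvx : ∀ i, Convex ℝ (C i)) (hint : ∀ i, (interior (C i)).Nonempty) :
    interior (⋃ i, C i) = ⋃ i, interior (C i) ∧
      interior (closure (⋃ i, C i)) = interior (⋃ i, C i) := by
  set U : Set (EuclideanSpace ℝ (Fin n)) := ⋃ i, C i with hU
  have hUcvx : Convex ℝ U :=
    (directed_of_isDirected_le fun _ _ h => hmono h).convex_iUnion hcvx
  obtain ⟨y, hy⟩ := hint 0
  have h1 : interior U = ⋃ i, interior (C i) := by
    apply Set.Subset.antisymm
    · intro x hx
      obtain ⟨t, ht, htU⟩ := exists_pos_smul_mem isOpen_interior hx y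
      have hzU : x + t • (x - y) ∈ U := interior_subset htU
      obtain ⟨i, hzi⟩ := Set.mem_iUnion.mp hzU
      have hyi : y ∈ interior (C i) :=
        interior_mono (hmono (Nat.zero_le i)) hy
      exact Set.mem_iUnion.mpr ⟨i, mem_interior_of_combo (hcvx i) ht hyi
        (subset_closure hzi)⟩
    · exact Set.iUnion_subset fun i => interior_mono (Set.subset_iUnion C i)
  refine ⟨h1, Set.Subset.antisymm ?_ (interior_mono subset_closure)⟩
  intro x hx
  obtain ⟨t, ht, htV⟩ := exists_pos_smul_mem isOpen_interior hx y
  have hyU : y ∈ interior U := interior_mono (Set.subset_iUnion C 0) hy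
  exact mem_interior_of_combo hUcvx ht hyU
    (interior_subset htV)
end

section
/- Order cancellation for convex sets: let A, B, C be subsets of ℝⁿ with A nonempty and compact, C convex, and A + B ⊆ A + C (Minkowski sums). Then B ⊆ C. -/
/-!
Induction on the dimension. If `b ∉ C`, some nonzero functional `f` satisfies `f ≤ f b` on `C`:
separate `b` from the interior of `C` when it is nonempty, and otherwise take a functional that is
constant on the proper affine span of `C`. Comparing values of `f` in `a + b = a' + c`, with `a`
maximising `f` on `A`, shows that the faces `A ∩ {f = max}` and `C ∩ {f = f b}` satisfy the same
hypothesis. Both lie in translates of `ker f`, so the induction hypothesis gives `b ∈ C`.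
-/

open Pointwise Set Module

theorem forall_add_mem_add_vadd {E : Type*} [AddCommGroup E] {A C : Set E} {b : E}
    (h : ∀ a ∈ A, a + b ∈ A + C) (u v : E) :
    ∀ a ∈ u +ᵥ A, a + (v + b) ∈ (u +ᵥ A) + (v +ᵥ C) := by
  rintro _ ⟨a, ha, rfl⟩
  obtain ⟨a₂, ha₂, c₂, hc₂, hsum : a₂ + c₂ = a + b⟩ := h a ha
  refine ⟨u +ᵥ a₂, vadd_mem_vadd_set ha₂, v +ᵥ c₂, vadd_mem_vadd_set hc₂, ?_⟩
  simp only [vadd_eq_add]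
  rw [add_add_add_comm, hsum, add_add_add_comm]

theorem forall_add_mem_add_preimage {E F G : Type*} [Add E] [Add F] [FunLike G F E]
    [AddHomClass G F E] (g : G) (hg : Function.Injective g) {A C : Set E} {b : F}
    (hA : A ⊆ range g) (hC : C ⊆ range g) (h : ∀ a ∈ A, a + g b ∈ A + C) :
    ∀ x ∈ g ⁻¹' A, x + b ∈ g ⁻¹' A + g ⁻¹' C := by
  intro x hx
  obtain ⟨a₂, ha₂, c₂, hc₂, hsum : a₂ + c₂ = g x + g b⟩ := h (g x) hx
  obtain ⟨y, rfl⟩ := hA ha₂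
  obtain ⟨z, rfl⟩ := hC hc₂
  exact ⟨y, ha₂, z, hc₂, hg (by rw [map_add, map_add, hsum])⟩

theorem forall_add_mem_add_inter_preimage {E F : Type*} [Add E] [FunLike F E ℝ]
    [AddHomClass F E ℝ] (f : F) {A C : Set E} {a₁ b : E} (h : ∀ a ∈ A, a + b ∈ A + C)
    (hA : IsMaxOn f A a₁) (hC : ∀ c ∈ C, f c ≤ f b) :
    ∀ a ∈ A ∩ f ⁻¹' {f a₁}, a + b ∈ A ∩ f ⁻¹' {f a₁} + C ∩ f ⁻¹' {f b} := by
  rintro a ⟨ha, hfa : f a = f a₁⟩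
  obtain ⟨a₂, ha₂, c₂, hc₂, hsum : a₂ + c₂ = a + b⟩ := h a ha
  have hf : f a₂ + f c₂ = f a + f b := by rw [← map_add, ← map_add, hsum]
  have ha₂le : f a₂ ≤ f a₁ := hA ha₂
  have hc₂le : f c₂ ≤ f b := hC c₂ hc₂
  exact ⟨a₂, ⟨ha₂, (by linarith : f a₂ = f a₁)⟩, c₂, ⟨hc₂, (by linarith : f c₂ = f b)⟩, hsum⟩

theorem LinearMap.preimage_singleton_subset_vadd_ker {R E F : Type*} [Ring R] [AddCommGroup E]
    [Module R E] [AddCommGroup F] [Module R F] (f : E →ₗ[R] F) (p : E) :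
    f ⁻¹' {f p} ⊆ p +ᵥ (LinearMap.ker f : Set E) :=
  fun x hx => ⟨x - p, by simpa [sub_eq_zero] using hx, by simp⟩

theorem exists_dual_ne_zero_forall_eq_of_affineSpan_ne_top {k V : Type*} [Field k]
    [AddCommGroup V] [Module k V] {s : Set V} {p : V} (hp : p ∈ s)
    (hs : affineSpan k s ≠ ⊤) : ∃ g : Dual k V, g ≠ 0 ∧ ∀ x ∈ s, g x = g p := by
  have hdir : (affineSpan k s).direction < ⊤ := by
    rwa [lt_top_iff_ne_top, Ne,
      AffineSubspace.direction_eq_top_iff_of_nonempty ⟨p, subset_affineSpan k s hp⟩]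
  obtain ⟨g, hg0, hg⟩ := Submodule.exists_dual_map_eq_bot_of_lt_top hdir inferInstance
  refine ⟨g, hg0, fun x hx => ?_⟩
  have hmem : x - p ∈ (affineSpan k s).direction :=
    AffineSubspace.vsub_mem_direction (subset_affineSpan k s hx) (subset_affineSpan k s hp)
  have : g (x - p) = 0 := by
    simpa [hg] using Submodule.mem_map_of_mem (f := g) hmem
  rwa [map_sub, sub_eq_zero] at this

theorem Convex.exists_ne_zero_forall_le_of_notMem {E : Type*} [NormedAddCommGroup E]
    [NormedSpace ℝ E] [FiniteDimensional ℝ E] {C : Set E} {b : E}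
    (hC : Convex ℝ C) (hCne : C.Nonempty) (hb : b ∉ C) :
    ∃ f : StrongDual ℝ E, f ≠ 0 ∧ ∀ c ∈ C, f c ≤ f b := by
  by_cases hint : (interior C).Nonempty
  · exact geometric_hahn_banach_of_nonempty_interior_point hC (fun h => hb (interior_subset h)) hint
  obtain ⟨p, hp⟩ := hCne
  obtain ⟨g, hg0, hg⟩ := exists_dual_ne_zero_forall_eq_of_affineSpan_ne_top hp
    (mt hC.interior_nonempty_iff_affineSpan_eq_top.2 hint)
  set f := LinearMap.toContinuousLinearMap g
  have hf0 : f ≠ 0 := by simpa [f] using hg0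
  rcases le_total (f p) (f b) with hle | hle
  · exact ⟨f, hf0, fun c hc => (hg c hc).trans_le hle⟩
  · exact ⟨-f, neg_ne_zero.2 hf0, fun c hc => by simpa [f, hg c hc] using hle⟩

section OrderCancellation

variable {E : Type*} [AddCommGroup E] [Module ℝ E] [TopologicalSpace E]

variable (E) in
def HasOrderCancellation : Prop :=
  ∀ ⦃A C : Set E⦄ ⦃b : E⦄, A.Nonempty → IsCompact A → Convex ℝ C →
    (∀ a ∈ A, a + b ∈ A + C) → b ∈ C

theorem HasOrderCancellation.mem_of_subset_vadd [ContinuousAdd E] {K : Submodule ℝ E}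
    (hK : IsClosed (K : Set E)) (hcanc : HasOrderCancellation K) {A C : Set E} {a₁ b : E}
    (ha₁ : a₁ ∈ A) (hA : IsCompact A) (hC : Convex ℝ C) (hAK : A ⊆ a₁ +ᵥ (K : Set E))
    (hCK : C ⊆ b +ᵥ (K : Set E)) (h : ∀ a ∈ A, a + b ∈ A + C) : b ∈ C := by
  have h₀ := forall_add_mem_add_preimage K.subtype Subtype.val_injective
    (b := 0) (by simpa using subset_vadd_set_iff.1 hAK) (by simpa using subset_vadd_set_iff.1 hCK)
    (by simpa using forall_add_mem_add_vadd h (-a₁) (-b))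
  have : (0 : K) ∈ K.subtype ⁻¹' (-b +ᵥ C) :=
    hcanc ⟨0, by simpa using ha₁⟩
      (hK.isClosedEmbedding_subtypeVal.isCompact_preimage (hA.image (continuous_const_vadd _)))
      ((hC.vadd _).linear_preimage K.subtype) h₀
  simpa [mem_vadd_set_iff_neg_vadd_mem] using this

end OrderCancellation

theorem hasOrderCancellation_of_finiteDimensional {E : Type*} [NormedAddCommGroup E]
    [NormedSpace ℝ E] [FiniteDimensional ℝ E] : HasOrderCancellation E := by
  induction hd : finrank ℝ E using Nat.strong_induction_on generalizing E with
  | _ d ih =>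
  intro A C b hAne hA hC h
  by_contra hb
  obtain ⟨a₀, ha₀⟩ := hAne
  obtain ⟨-, -, c₀, hc₀, -⟩ := h a₀ ha₀
  obtain ⟨f, hf0, hfC⟩ := hC.exists_ne_zero_forall_le_of_notMem ⟨c₀, hc₀⟩ hb
  obtain ⟨a₁, ha₁, hmax⟩ := hA.exists_isMaxOn ⟨a₀, ha₀⟩ f.continuous.continuousOn
  have hK : finrank ℝ (LinearMap.ker (f : E →ₗ[ℝ] ℝ)) < d := hd ▸ Submodule.finrank_lt (by
    rwa [Ne, LinearMap.ker_eq_top, ← ContinuousLinearMap.toLinearMap_zero,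
      ContinuousLinearMap.coe_inj])
  refine hb (HasOrderCancellation.mem_of_subset_vadd f.isClosed_ker (ih _ hK rfl)
    (A := A ∩ f ⁻¹' {f a₁}) (C := C ∩ f ⁻¹' {f b}) ⟨ha₁, rfl⟩
    (hA.inter_right (isClosed_singleton.preimage f.continuous))
    (hC.inter (convex_hyperplane f.isLinear (f b)))
    (inter_subset_right.trans (LinearMap.preimage_singleton_subset_vadd_ker _ a₁))
    (inter_subset_right.trans (LinearMap.preimage_singleton_subset_vadd_ker _ b))
    (forall_add_mem_add_inter_preimage f h hmax hfC)).1

/-- Order cancellation law for Minkowski sums: a nonempty compact summand can be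
cancelled against a convex one. -/
theorem order_cancellation {n : ℕ} (A B C : Set (Fin n → ℝ))
    (hAne : A.Nonempty) (hAcpt : IsCompact A) (hCcvx : Convex ℝ C)
    (h : A + B ⊆ A + C) : B ⊆ C :=
  fun _ hb => hasOrderCancellation_of_finiteDimensional hAne hAcpt hCcvx
    fun _ ha => h (add_mem_add ha hb)
end

section
/- Consider the one-dimensional system x(t+1) = α x(t) + u(t) + d(t) with |α| > 1, disturbance d ∈ [−d_max, d_max], input constraint |u| ≤ u_max, state constraint |x| ≤ x_max, and assume u_max ≥ d_max ≥ 0 and x_max ≥ c_d ≥ d_max where c_d = (d_max − u_max)/(1 − |α|). Then the interval [−c_d, c_d] is the maximal robust controlled invariant set: (i) [−c_d, c_d] is robust controlled invariant, and (ii) every robust controlled invariant set contained in [−x_max, x_max] is contained in [−c_d, c_d]. -/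
/-- A set `C ⊆ ℝ` is robust controlled invariant for the scalar system
`x⁺ = α x + u + d` in the safe set `[-xmax,xmax] × [-umax,umax]`
with disturbances `d ∈ [-dmax,dmax]`. -/
def IsRCIS1D (α dmax umax xmax : ℝ) (C : Set ℝ) : Prop :=
  ∀ x ∈ C, ∃ u : ℝ, |u| ≤ umax ∧ |x| ≤ xmax ∧
    ∀ d : ℝ, |d| ≤ dmax → α * x + u + d ∈ C

theorem maximal_rcis_1d (α dmax umax xmax cd : ℝ)
    (hα : 1 < |α|) (hud : dmax ≤ umax) (hd : 0 ≤ dmax)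
    (hcd : cd = (dmax - umax) / (1 - |α|))
    (hcd_lb : dmax ≤ cd) (hcd_ub : cd ≤ xmax) :
    IsRCIS1D α dmax umax xmax (Set.Icc (-cd) cd) ∧
      ∀ C : Set ℝ, IsRCIS1D α dmax umax xmax C → C ⊆ Set.Icc (-xmax) xmax →
        C ⊆ Set.Icc (-cd) cd := by
  have hαne : (1 : ℝ) - |α| ≠ 0 := by linarith
  have key : |α| * cd = cd + umax - dmax := by
    rw [hcd]; field_simp; ring
  have hcd0 : 0 ≤ cd := le_trans hd hcd_lb
  constructor
  · intro x hx
    obtain ⟨hx1, hx2⟩ := hx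
    have hxabs : |x| ≤ cd := abs_le.mpr ⟨hx1, hx2⟩
    have hax : |α * x| ≤ |α| * cd := by
      rw [abs_mul]
      exact mul_le_mul_of_nonneg_left hxabs (abs_nonneg α)
    have haxle : α * x ≤ |α| * cd := le_trans (le_abs_self _) hax
    have haxge : -(|α| * cd) ≤ α * x := neg_le_of_abs_le hax
    set m := cd - dmax with hm
    have hm0 : 0 ≤ m := by simp [hm]; linarith
    set p := max (-m) (min m (α * x)) with hp
    refine ⟨p - α * x, ?_, le_trans hxabs hcd_ub, ?_⟩
    · rw [abs_le]
      rcases le_total (α * x) m with h1 | h1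
      · rcases le_total (-m) (α * x) with h2 | h2
        · have : p = α * x := by
            rw [hp, min_eq_right h1, max_eq_right h2]
          constructor <;> simp [this] <;> linarith
        · have : p = -m := by
            rw [hp, min_eq_right h1]
            exact max_eq_left h2
          constructor <;> rw [this] <;> [skip; skip] <;> nlinarith
      · have : p = m := by
          rw [hp, min_eq_left h1, max_eq_right (by linarith : -m ≤ m)]
        constructor <;> rw [this] <;> nlinarith
    · intro d hdle
      have hpm : |p| ≤ m := by
        rw [abs_le, hp]
        constructor
        · exact le_max_left _ _
        · exact max_le (by linarith) (le_trans (min_le_left _ _) le_rfl)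
      rw [abs_le] at hpm hdle
      constructor <;> simp <;> nlinarith [hpm.1, hpm.2, hdle.1, hdle.2]
  · intro C hC hsub x hx
    by_contra hxn
    have hxabs : cd < |x| := by
      rw [Set.mem_Icc, not_and_or] at hxn
      rcases hxn with h | h <;> [exact lt_of_not_ge (fun hh => h (by cases abs_le.mp hh; linarith)); skip]
      · exact lt_of_not_ge (fun hh => h (by cases abs_le.mp hh; linarith))
    set δ := |x| - cd with hδ
    have hδ0 : 0 < δ := by simp [hδ]; linarith
    -- step lemma
    have step : ∀ y ∈ C, ∃ z ∈ C, |α| * (|y| - cd) ≤ |z| - cd := by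
      intro y hy
      obtain ⟨u, hu, -, hstep⟩ := hC y hy
      set d : ℝ := if 0 ≤ α * y + u then dmax else -dmax with hdd
      have hdabs : |d| ≤ dmax := by
        rw [hdd]; split <;> simp [abs_of_nonneg hd, abs_neg]
      refine ⟨α * y + u + d, hstep d hdabs, ?_⟩
      have habs : |α * y + u + d| = |α * y + u| + dmax := by
        rw [hdd]
        split
        · rename_i h
          rw [abs_of_nonneg (by linarith), abs_of_nonneg h]
        · rename_i h
          push_neg at h
          rw [abs_of_nonpos (by linarith), abs_of_nonpos (le_of_lt h)]
          ring
      have h1 : |α| * |y| - |u| ≤ |α * y + u| := by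
        have := abs_sub_abs_le_abs_sub (α * y) (-u)
        simp [abs_mul] at this ⊢
        nlinarith [abs_sub_abs_le_abs_sub (α * y + u) u, abs_mul α y]
      rw [habs]
      nlinarith
    -- iterate
    have iter : ∀ n : ℕ, ∃ z ∈ C, |α| ^ n * δ ≤ |z| - cd := by
      intro n
      induction n with
      | zero => exact ⟨x, hx, by simp [hδ]⟩
      | succ n ih =>
        obtain ⟨z, hz, hzge⟩ := ih
        obtain ⟨w, hw, hwge⟩ := step z hz
        refine ⟨w, hw, ?_⟩
        have hpow : (1:ℝ) ≤ |α| ^ n := one_le_pow₀ (le_of_lt hα)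
        calc |α| ^ (n+1) * δ = |α| * (|α| ^ n * δ) := by ring
        _ ≤ |α| * (|z| - cd) := by
            apply mul_le_mul_of_nonneg_left hzge (by linarith)
        _ ≤ |w| - cd := hwge
    obtain ⟨n, hn⟩ := pow_unbounded_of_one_lt ((xmax - cd) / δ) hα
    obtain ⟨z, hz, hzge⟩ := iter n
    have hzx : |z| ≤ xmax := by
      have := hsub hz
      rw [Set.mem_Icc] at this
      exact abs_le.mpr ⟨this.1, this.2⟩
    have : xmax - cd < |α| ^ n * δ := by
      rw [div_lt_iff₀ hδ0] at hn
      linarith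
    linarith
end

section
/- Consider the system x(t+1) = α x(t) + u(t) + d(t) with |α| > 1, d ∈ [−d_max, d_max], safe set [−x_max,x_max] × [−u_max,u_max], u_max ≥ d_max, and c_d = (d_max − u_max)/(1 − |α|) ∈ [d_max, x_max]. If C₀ = [−c₀, c₀] with c₀ ∈ [d_max, c_d], then the k-step backward reachable set of C₀ equals [−c_k, c_k] with c_k = (c₀ − c_d)/|α|^k + c_d, and the Hausdorff distance between [−c_k, c_k] and the maximal RCIS [−c_d, c_d] equals (c_d − c₀)/|α|^k, which tends to 0 exponentially as k → ∞. -/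
/-- One-step backward reachable set for the scalar system `x⁺ = α x + u + d`
in the safe set `[-xmax,xmax] × [-umax,umax]` with disturbances in
`[-dmax, dmax]`. -/
def Pre1D (α dmax umax xmax : ℝ) (X : Set ℝ) : Set ℝ :=
  {x | |x| ≤ xmax ∧ ∃ u : ℝ, |u| ≤ umax ∧
    ∀ d : ℝ, |d| ≤ dmax → α * x + u + d ∈ X}

lemma pre_icc (α dmax umax xmax c : ℝ) (hα : 1 < |α|) (hd : 0 ≤ dmax)
    (hud : dmax ≤ umax) (hc : dmax ≤ c)
    (hm : (c + umax - dmax) / |α| ≤ xmax) :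
    {x | |x| ≤ xmax ∧ ∃ u : ℝ, |u| ≤ umax ∧
      ∀ d : ℝ, |d| ≤ dmax → α * x + u + d ∈ Set.Icc (-c) c} =
      Set.Icc (-((c + umax - dmax) / |α|)) ((c + umax - dmax) / |α|) := by
  have hα0 : (0:ℝ) < |α| := by linarith
  have hcd0 : 0 ≤ c - dmax := by linarith
  have hu0 : 0 ≤ umax := le_trans hd hud
  ext x
  simp only [Set.mem_setOf_eq, Set.mem_Icc]
  constructor
  · rintro ⟨hx, u, hu, hall⟩
    have h1 := hall dmax (by rw [abs_of_nonneg hd])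
    have h2 := hall (-dmax) (by rw [abs_neg, abs_of_nonneg hd])
    have hub : α * x + u ≤ c - dmax := by linarith [h1.2]
    have hlb : -(c - dmax) ≤ α * x + u := by linarith [h2.1]
    have h3 : |α * x| ≤ |α * x + u| + |u| := by
      have := abs_add_le (α * x + u) (-u); simpa using this
    have h4 : |α * x + u| ≤ c - dmax := abs_le.mpr ⟨hlb, hub⟩
    have h5 : |α| * |x| ≤ c - dmax + umax := by
      rw [← abs_mul]; linarith
    have h6 : |x| ≤ (c + umax - dmax) / |α| := by
      rw [le_div_iff₀ hα0]; linarith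
    exact abs_le.mp h6
  · rintro ⟨hxl, hxu⟩
    have h6 : |x| ≤ (c + umax - dmax) / |α| := abs_le.mpr ⟨hxl, hxu⟩
    have h5 : |α| * |x| ≤ c - dmax + umax := by
      have := (le_div_iff₀ hα0).mp h6; linarith
    have hs : |α * x| ≤ c - dmax + umax := by rw [abs_mul]; linarith
    obtain ⟨hsl, hsu⟩ := abs_le.mp hs
    refine ⟨le_trans h6 hm, ?_⟩
    by_cases h1 : c - dmax < α * x
    · refine ⟨c - dmax - α * x, ?_, ?_⟩
      · rw [abs_of_nonpos (by linarith)]; linarith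
      · intro d hdle; obtain ⟨hdl, hdu⟩ := abs_le.mp hdle
        constructor <;> linarith
    by_cases h2 : α * x < -(c - dmax)
    · refine ⟨-(c - dmax) - α * x, ?_, ?_⟩
      · rw [abs_of_nonneg (by linarith)]; linarith
      · intro d hdle; obtain ⟨hdl, hdu⟩ := abs_le.mp hdle
        constructor <;> linarith
    · refine ⟨0, by simpa using hu0, ?_⟩
      intro d hdle; obtain ⟨hdl, hdu⟩ := abs_le.mp hdle
      push_neg at h1 h2
      constructor <;> linarith

lemma hdist_icc (a b : ℝ) (h0 : 0 ≤ a) (hab : a ≤ b) :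
    Metric.hausdorffDist (Set.Icc (-a) a) (Set.Icc (-b) b) = b - a := by
  have hb0 : 0 ≤ b := le_trans h0 hab
  have hne1 : (Set.Icc (-a) a).Nonempty := ⟨0, ⟨by linarith, by linarith⟩⟩
  have hne2 : (Set.Icc (-b) b).Nonempty := ⟨0, ⟨by linarith, by linarith⟩⟩
  have hedist : EMetric.hausdorffEdist (Set.Icc (-a) a) (Set.Icc (-b) b) ≠ ⊤ :=
    Metric.hausdorffEdist_ne_top_of_nonempty_of_bounded hne1 hne2
      (Metric.isBounded_Icc _ _) (Metric.isBounded_Icc _ _)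
  apply le_antisymm
  · apply Metric.hausdorffDist_le_of_mem_dist (by linarith)
    · intro x hx
      refine ⟨x, Set.Icc_subset_Icc (by linarith) hab hx, ?_⟩
      simp only [dist_self]; linarith
    · intro x hx
      obtain ⟨hxl, hxu⟩ := hx
      by_cases h1 : a < x
      · exact ⟨a, ⟨by linarith, le_refl a⟩,
          by rw [Real.dist_eq, abs_of_nonneg (by linarith)]; linarith⟩
      by_cases h2 : x < -a
      · exact ⟨-a, ⟨le_refl _, by linarith⟩,
          by rw [Real.dist_eq, abs_of_nonpos (by linarith)]; linarith⟩
      · push_neg at h1 h2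
        exact ⟨x, ⟨h2, h1⟩, by simp only [dist_self]; linarith⟩
  · have hinf : Metric.infDist b (Set.Icc (-a) a) = b - a := by
      obtain ⟨y, hy, hyd⟩ :=
        (isClosed_Icc : IsClosed (Set.Icc (-a) a)).exists_infDist_eq_dist hne1 b
      obtain ⟨hyl, hyu⟩ := hy
      apply le_antisymm
      · have := Metric.infDist_le_dist_of_mem
          (x := b) (y := a) (s := Set.Icc (-a) a) ⟨by linarith, le_refl a⟩
        rwa [Real.dist_eq, abs_of_nonneg (by linarith)] at this
      · rw [hyd, Real.dist_eq, abs_of_nonneg (by linarith)]; linarith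
    have h1 : Metric.infDist b (Set.Icc (-a) a) ≤
        Metric.hausdorffDist (Set.Icc (-b) b) (Set.Icc (-a) a) :=
      Metric.infDist_le_hausdorffDist_of_mem ⟨by linarith, le_refl b⟩
        (by rwa [EMetric.hausdorffEdist_comm])
    rw [Metric.hausdorffDist_comm] at h1
    linarith [hinf ▸ h1]

theorem backward_reachable_1d (α dmax umax xmax cd c₀ : ℝ)
    (hα : 1 < |α|) (hud : dmax ≤ umax) (hd : 0 ≤ dmax)
    (hcd : cd = (dmax - umax) / (1 - |α|))
    (hcd_lb : dmax ≤ cd) (hcd_ub : cd ≤ xmax)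
    (hc₀ : c₀ ∈ Set.Icc dmax cd) :
    (∀ k : ℕ,
      (Pre1D α dmax umax xmax)^[k] (Set.Icc (-c₀) c₀) =
        Set.Icc (-((c₀ - cd) / |α| ^ k + cd)) ((c₀ - cd) / |α| ^ k + cd) ∧
      Metric.hausdorffDist ((Pre1D α dmax umax xmax)^[k] (Set.Icc (-c₀) c₀))
        (Set.Icc (-cd) cd) = (cd - c₀) / |α| ^ k) ∧
    Filter.Tendsto (fun k : ℕ => (cd - c₀) / |α| ^ k) Filter.atTop (nhds 0) := by
  obtain ⟨hc₀l, hc₀u⟩ := hc₀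
  have hα0 : (0:ℝ) < |α| := by linarith
  have h1α : (1:ℝ) - |α| ≠ 0 := sub_ne_zero_of_ne (ne_of_lt hα)
  have hkey : |α| * cd = cd + umax - dmax := by
    have : cd * (1 - |α|) = dmax - umax := by
      rw [hcd, div_mul_cancel₀ _ h1α]
    nlinarith
  set F := Pre1D α dmax umax xmax with hF
  set ck : ℕ → ℝ := fun k => (c₀ - cd) / |α| ^ k + cd with hckdef
  have hpow : ∀ k : ℕ, (0:ℝ) < |α| ^ k := fun k => pow_pos hα0 k
  have hpow1 : ∀ k : ℕ, (1:ℝ) ≤ |α| ^ k := fun k => one_le_pow₀ (le_of_lt hα)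
  have hbd : ∀ k : ℕ, c₀ ≤ ck k ∧ ck k ≤ cd := by
    intro k
    constructor
    · have h1 : (c₀ - cd) ≤ (c₀ - cd) / |α| ^ k := by
        rw [le_div_iff₀ (hpow k)]
        nlinarith [hpow1 k]
      simp only [hckdef]; linarith
    · have h1 : (c₀ - cd) / |α| ^ k ≤ 0 :=
        div_nonpos_iff.mpr (Or.inr ⟨by linarith, le_of_lt (hpow k)⟩)
      simp only [hckdef]; linarith
  have hiter : ∀ k : ℕ, F^[k] (Set.Icc (-c₀) c₀) = Set.Icc (-(ck k)) (ck k) := by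
    intro k
    induction k with
    | zero => simp [hckdef]
    | succ k ih =>
      rw [Function.iterate_succ_apply', ih]
      have hstep : F (Set.Icc (-(ck k)) (ck k)) =
          Set.Icc (-((ck k + umax - dmax) / |α|)) ((ck k + umax - dmax) / |α|) := by
        apply pre_icc α dmax umax xmax (ck k) hα hd hud (le_trans hc₀l (hbd k).1)
        have h2 : (ck k + umax - dmax) / |α| ≤ cd := by
          rw [div_le_iff₀ hα0]
          nlinarith [(hbd k).2]
        linarith
      rw [hstep]
      have heq : (ck k + umax - dmax) / |α| = ck (k + 1) := by
        have h2 : ck k + umax - dmax = (c₀ - cd) / |α| ^ k + |α| * cd := by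
          simp only [hckdef]; linarith
        rw [h2, add_div, div_div, ← pow_succ,
          mul_div_cancel_left₀ cd (ne_of_gt hα0)]
      rw [heq]
  refine ⟨fun k => ⟨hiter k, ?_⟩, ?_⟩
  · rw [hiter k]
    have h0 : 0 ≤ ck k := le_trans (le_trans hd hc₀l) (hbd k).1
    rw [hdist_icc (ck k) cd h0 (hbd k).2]
    simp only [hckdef]
    ring
  · have heq : ∀ k : ℕ, (cd - c₀) / |α| ^ k = (cd - c₀) * (|α|⁻¹) ^ k := by
      intro k; rw [div_eq_mul_inv, inv_pow]
    simp only [heq]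
    have h1 : |(|α|⁻¹)| < 1 := by
      rw [abs_of_nonneg (by positivity)]
      exact inv_lt_one_of_one_lt₀ hα
    have := (tendsto_pow_atTop_nhds_zero_of_abs_lt_one h1).const_mul (cd - c₀)
    simpa using this
end

section
/- Suppose C ⊆ ℝⁿ is convex with Pre^N(λγ·C) ⊇ γ·C where γ ∈ (0,1), λ ∈ [0,1), N ≥ 1, the safe set S and disturbance set D are convex, and Pre^N(C) ⊇ C (C is robust controlled invariant under N-step iteration). Then for any ξ with λγ ≤ ξ < 1, Pre^N(ξ·C) ⊇ g(ξ)·C, where g(ξ) = ((1−γ)/(1−λγ))·ξ + ((1−λ)γ)/(1−λγ). -/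
/-!
By superadditivity of `Pre^N` under convex combinations and convexity of `C`, the pairs `(α, β)`
with `α • C ⊆ Pre^N (β • C)` form a convex set. It contains `(1, 1)` (invariance) and
`(γ, λγ)` (contraction), and `(g ξ, ξ)` is the convex combination of these two with weights
`(ξ - λγ, 1 - ξ) / (1 - λγ)`.
-/

open Pointwise

section Superadditive

variable {V : Type*} [AddCommGroup V] [Module ℝ V] {f : Set V → Set V} {a b : ℝ}

theorem smul_iterate_add_smul_iterate_subset (hmono : Monotone f)
    (hf : ∀ X Y, a • f X + b • f Y ⊆ f (a • X + b • Y)) (N : ℕ) (X Y : Set V) :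
    a • f^[N] X + b • f^[N] Y ⊆ f^[N] (a • X + b • Y) := by
  induction N generalizing X Y with
  | zero => exact subset_rfl
  | succ k ih =>
    simp only [Function.iterate_succ_apply]
    exact (ih _ _).trans (hmono.iterate k (hf X Y))

theorem convexCombination_smul_subset_iterate_smul (hmono : Monotone f)
    (hf : ∀ X Y, a • f X + b • f Y ⊆ f (a • X + b • Y)) (ha : 0 ≤ a) (hb : 0 ≤ b)
    {C : Set V} (hC : Convex ℝ C) {N : ℕ} {α α' β β' : ℝ}
    (hα : 0 ≤ α) (hα' : 0 ≤ α') (hβ : 0 ≤ β) (hβ' : 0 ≤ β')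
    (h : α • C ⊆ f^[N] (β • C)) (h' : α' • C ⊆ f^[N] (β' • C)) :
    (a * α + b * α') • C ⊆ f^[N] ((a * β + b * β') • C) := by
  rw [hC.add_smul (by positivity) (by positivity),
    hC.add_smul (by positivity) (by positivity), mul_smul, mul_smul, mul_smul, mul_smul]
  exact (Set.add_subset_add (Set.smul_set_mono h) (Set.smul_set_mono h')).trans
    (smul_iterate_add_smul_iterate_subset hmono hf N _ _)

end Superadditive

section Pre

variable {n m l : ℕ} (A : Matrix (Fin n) (Fin n) ℝ) (B : Matrix (Fin n) (Fin m) ℝ)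
  (E : Matrix (Fin n) (Fin l) ℝ) {S : Set ((Fin n → ℝ) × (Fin m → ℝ))} {D : Set (Fin l → ℝ)}

theorem monotone_pre : Monotone (fun X => Pre A B E X S D) := by
  rintro X Y hXY x ⟨u, hxu, hX⟩
  exact ⟨u, hxu, fun d hd => hXY (hX d hd)⟩

/-- The same disturbance acts on both trajectories, so its contribution recombines exactly
because `a + b = 1`. -/
theorem smul_pre_add_smul_pre_subset (hS : Convex ℝ S) {a b : ℝ} (ha : 0 ≤ a) (hb : 0 ≤ b)
    (hab : a + b = 1) (X Y : Set (Fin n → ℝ)) :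
    a • Pre A B E X S D + b • Pre A B E Y S D ⊆ Pre A B E (a • X + b • Y) S D := by
  rintro _ ⟨_, ⟨x, ⟨u, hxu, hX⟩, rfl⟩, _, ⟨y, ⟨v, hyv, hY⟩, rfl⟩, rfl⟩
  refine ⟨a • u + b • v, hS hxu hyv ha hb hab, fun d hd => ?_⟩
  refine ⟨_, Set.smul_mem_smul_set (hX d hd), _, Set.smul_mem_smul_set (hY d hd), ?_⟩
  obtain rfl : b = 1 - a := by linarith
  simp only [Matrix.mulVec_add, Matrix.mulVec_smul]
  module

end Pre

theorem contractive_expansion_general {n m l : ℕ} (A : Matrix (Fin n) (Fin n) ℝ)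
    (B : Matrix (Fin n) (Fin m) ℝ) (E : Matrix (Fin n) (Fin l) ℝ)
    (S : Set ((Fin n → ℝ) × (Fin m → ℝ))) (D : Set (Fin l → ℝ))
    (hScvx : Convex ℝ S)
    (C : Set (Fin n → ℝ)) (hCcvx : Convex ℝ C)
    (γ lam : ℝ) (hγ : γ ∈ Set.Ioo (0 : ℝ) 1) (hlam : lam ∈ Set.Ico (0 : ℝ) 1)
    (N : ℕ)
    (hcontr : γ • C ⊆ (fun X => Pre A B E X S D)^[N] ((lam * γ) • C))
    (hinv : C ⊆ (fun X => Pre A B E X S D)^[N] C) :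
    ∀ ξ : ℝ, lam * γ ≤ ξ → ξ < 1 →
      ((1 - γ) / (1 - lam * γ) * ξ + (1 - lam) * γ / (1 - lam * γ)) • C ⊆
        (fun X => Pre A B E X S D)^[N] (ξ • C) := by
  intro ξ hξ hξ1
  obtain ⟨hγ0, hγ1⟩ := hγ
  obtain ⟨hlam0, hlam1⟩ := hlam
  have hden : 0 < 1 - lam * γ := by nlinarith
  set a := (ξ - lam * γ) / (1 - lam * γ) with ha_def
  set b := (1 - ξ) / (1 - lam * γ) with hb_def
  have ha : 0 ≤ a := div_nonneg (by linarith) hden.le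
  have hb : 0 ≤ b := div_nonneg (by linarith) hden.le
  have hab : a + b = 1 := by rw [ha_def, hb_def]; field_simp; ring
  have hg : (1 - γ) / (1 - lam * γ) * ξ + (1 - lam) * γ / (1 - lam * γ) = a * 1 + b * γ := by
    rw [ha_def, hb_def]; field_simp; ring
  have hξ_eq : ξ = a * 1 + b * (lam * γ) := by rw [ha_def, hb_def]; field_simp; ring
  have hinv' : (1 : ℝ) • C ⊆ (fun X => Pre A B E X S D)^[N] ((1 : ℝ) • C) := by
    simpa only [one_smul] using hinv
  rw [hg, hξ_eq]
  exact convexCombination_smul_subset_iterate_smul (monotone_pre A B E)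
    (smul_pre_add_smul_pre_subset A B E hScvx ha hb hab) ha hb hCcvx zero_le_one hγ0.le
    zero_le_one (by positivity) hinv' hcontr

theorem contractive_expansion {n m l : ℕ} (A : Matrix (Fin n) (Fin n) ℝ)
    (B : Matrix (Fin n) (Fin m) ℝ) (E : Matrix (Fin n) (Fin l) ℝ)
    (S : Set ((Fin n → ℝ) × (Fin m → ℝ))) (D : Set (Fin l → ℝ))
    (hScvx : Convex ℝ S) (hDcvx : Convex ℝ D)
    (C : Set (Fin n → ℝ)) (hCcvx : Convex ℝ C)
    (γ lam : ℝ) (hγ : γ ∈ Set.Ioo (0 : ℝ) 1) (hlam : lam ∈ Set.Ico (0 : ℝ) 1)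
    (N : ℕ) (hN : 1 ≤ N)
    (hcontr : γ • C ⊆ (fun X => Pre A B E X S D)^[N] ((lam * γ) • C))
    (hinv : C ⊆ (fun X => Pre A B E X S D)^[N] C) :
    ∀ ξ : ℝ, lam * γ ≤ ξ → ξ < 1 →
      ((1 - γ) / (1 - lam * γ) * ξ + (1 - lam) * γ / (1 - lam * γ)) • C ⊆
        (fun X => Pre A B E X S D)^[N] (ξ • C) :=
  contractive_expansion_general A B E S D hScvx C hCcvx γ lam hγ hlam N hcontr hinv
end

section
/- Let C ⊆ ℝⁿ be a compact set with 0 ∈ C, and suppose λγ·C ⊆ C_k ⊆ C and g^j(λγ)·C ⊆ C_{k+jN} for all j, where g^j(λγ) ↑ 1 with 1 − g^j(λγ) = a^j(1−λγ) for a ∈ [0,1). Then the Hausdorff distance satisfies d(C_{k+jN}, C) ≤ (1 − g^j(λγ)) · sup_{x∈C} ‖x‖₂ = a^j (1−λγ) sup_{x∈C} ‖x‖₂, i.e., it decays exponentially in j. -/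
open Pointwise

lemma aux_hd {n : ℕ} (C D : Set (EuclideanSpace ℝ (Fin n))) (hCcpt : IsCompact C)
    (μ : ℝ) (hμ0 : 0 ≤ μ) (hμ1 : μ ≤ 1) (h1 : μ • C ⊆ D) (h2 : D ⊆ C) :
    Metric.hausdorffDist D C ≤ (1 - μ) * ⨆ x ∈ C, ‖x‖ := by
  obtain ⟨R, hR⟩ := hCcpt.isBounded.exists_norm_le
  have hbdd : BddAbove (Set.range fun x : EuclideanSpace ℝ (Fin n) => ⨆ _ : x ∈ C, ‖x‖) := by
    refine ⟨max R 0, ?_⟩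
    rintro y ⟨x, rfl⟩
    exact Real.iSup_le (fun h => (hR x h).trans (le_max_left _ _)) (le_max_right _ _)
  have hsup0 : 0 ≤ ⨆ x ∈ C, ‖x‖ :=
    Real.iSup_nonneg fun x => Real.iSup_nonneg fun _ => norm_nonneg _
  have hle : ∀ y ∈ C, ‖y‖ ≤ ⨆ x ∈ C, ‖x‖ := fun y hy =>
    le_ciSup_of_le hbdd y (le_of_eq (ciSup_pos (f := fun _ : y ∈ C => ‖y‖) hy).symm)
  have hr0 : 0 ≤ (1 - μ) * ⨆ x ∈ C, ‖x‖ := mul_nonneg (by linarith) hsup0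
  apply Metric.hausdorffDist_le_of_mem_dist hr0
  · intro x hx
    exact ⟨x, h2 hx, by simp [dist_self]; exact hr0⟩
  · intro y hy
    refine ⟨μ • y, h1 (Set.smul_mem_smul_set hy), ?_⟩
    have : dist (μ • y) y = (1 - μ) * ‖y‖ := by
      rw [dist_eq_norm]
      have : μ • y - y = (μ - 1) • y := by rw [sub_smul, one_smul]
      rw [this, norm_smul, Real.norm_eq_abs, abs_of_nonpos (by linarith)]
      ring
    rw [dist_comm, this]
    exact mul_le_mul_of_nonneg_left (hle y hy) (by linarith)

theorem hausdorff_exponential_decay {n : ℕ}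
    (C : Set (EuclideanSpace ℝ (Fin n))) (hCcpt : IsCompact C)
    (h0 : (0 : EuclideanSpace ℝ (Fin n)) ∈ C)
    (Cs : ℕ → Set (EuclideanSpace ℝ (Fin n)))
    (k N : ℕ) (lamγ a : ℝ) (μ : ℕ → ℝ)
    (ha : a ∈ Set.Ico (0 : ℝ) 1) (hlamγ : 0 ≤ lamγ)
    (hμ : ∀ j : ℕ, 1 - μ j = a ^ j * (1 - lamγ))
    (hμ0 : μ 0 = lamγ) (hμnonneg : ∀ j : ℕ, 0 ≤ μ j)
    (hk₁ : lamγ • C ⊆ Cs k) (hk₂ : Cs k ⊆ C)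
    (hlow : ∀ j : ℕ, μ j • C ⊆ Cs (k + j * N))
    (hup : ∀ j : ℕ, Cs (k + j * N) ⊆ C) :
    ∀ j : ℕ, Metric.hausdorffDist (Cs (k + j * N)) C ≤
      a ^ j * (1 - lamγ) * ⨆ x ∈ C, ‖x‖ := by
  intro j
  rcases le_or_gt lamγ 1 with hl1 | hl1
  · have hμj1 : μ j ≤ 1 := by
      have := hμ j
      nlinarith [pow_nonneg ha.1 j]
    have := aux_hd C (Cs (k + j * N)) hCcpt (μ j) (hμnonneg j) hμj1 (hlow j) (hup j)
    rwa [hμ j] at this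
  · -- lamγ > 1 forces C = {0}
    have hsub : lamγ • C ⊆ C := fun x hx => hk₂ (hk₁ hx)
    have hpow : ∀ x ∈ C, ∀ m : ℕ, (lamγ ^ m) • x ∈ C := by
      intro x hx m
      induction m with
      | zero => simpa using hx
      | succ m ih =>
        have : lamγ • (lamγ ^ m • x) ∈ C := hsub (Set.smul_mem_smul_set ih)
        rwa [smul_smul, ← pow_succ'] at this
    obtain ⟨R, hR⟩ := hCcpt.isBounded.exists_norm_le
    have hC0 : ∀ x ∈ C, x = 0 := by
      intro x hx
      by_contra hne
      have hx0 : 0 < ‖x‖ := norm_pos_iff.mpr hne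
      obtain ⟨m, hm⟩ := pow_unbounded_of_one_lt (R / ‖x‖) hl1
      have h1 := hR _ (hpow x hx m)
      rw [norm_smul, Real.norm_eq_abs, abs_of_nonneg (pow_nonneg hlamγ m)] at h1
      have : lamγ ^ m ≤ R / ‖x‖ := (le_div_iff₀ hx0).mpr h1
      linarith
    have hCeq : C = {0} := Set.eq_singleton_iff_unique_mem.mpr ⟨h0, hC0⟩
    have hCs : Cs (k + j * N) = C := by
      refine Set.Subset.antisymm (hup j) ?_
      intro x hx
      have hx0 : x = 0 := hC0 x hx
      have : μ j • (0 : EuclideanSpace ℝ (Fin n)) ∈ Cs (k + j * N) :=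
        hlow j (Set.smul_mem_smul_set h0)
      simpa [hx0] using this
    have hsup : (⨆ x ∈ C, ‖x‖) = 0 := by
      refine le_antisymm (Real.iSup_le (fun x => Real.iSup_le (fun hx => by
        rw [hC0 x hx]; simp) le_rfl) le_rfl) ?_
      exact Real.iSup_nonneg fun x => Real.iSup_nonneg fun _ => norm_nonneg _
    rw [hCs, Metric.hausdorffDist_self_zero, hsup, mul_zero]
end

section
/- Let C be a robust controlled invariant set of the system Σ in safe set S (i.e., C ⊆ Pre(C, S, D)), with S and D convex. Then the convex hull of C is also a robust controlled invariant set of Σ in S, and if S is compact and D is compact then the closure of C is also a robust controlled invariant set of Σ in S. -/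
open Pointwise

lemma pre_mono {n m l : ℕ} (A : Matrix (Fin n) (Fin n) ℝ) (B : Matrix (Fin n) (Fin m) ℝ)
    (E : Matrix (Fin n) (Fin l) ℝ) {X Y : Set (Fin n → ℝ)}
    (S : Set ((Fin n → ℝ) × (Fin m → ℝ))) (D : Set (Fin l → ℝ)) (h : X ⊆ Y) :
    Pre A B E X S D ⊆ Pre A B E Y S D := by
  rintro x ⟨u, hu, hx⟩
  exact ⟨u, hu, fun d hd => h (hx d hd)⟩

lemma pre_convex {n m l : ℕ} (A : Matrix (Fin n) (Fin n) ℝ) (B : Matrix (Fin n) (Fin m) ℝ)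
    (E : Matrix (Fin n) (Fin l) ℝ) {X : Set (Fin n → ℝ)}
    {S : Set ((Fin n → ℝ) × (Fin m → ℝ))} (D : Set (Fin l → ℝ))
    (hS : Convex ℝ S) (hX : Convex ℝ X) : Convex ℝ (Pre A B E X S D) := by
  rintro x ⟨u, huS, hu⟩ y ⟨v, hvS, hv⟩ a b ha hb hab
  refine ⟨a • u + b • v, ?_, ?_⟩
  · have := hS huS hvS ha hb hab
    simpa [Prod.smul_mk, Prod.mk_add_mk] using this
  · intro d hd
    have hmem := hX (hu d hd) (hv d hd) ha hb hab
    have hE : E.mulVec d = a • E.mulVec d + b • E.mulVec d := by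
      rw [← add_smul, hab, one_smul]
    have : A.mulVec (a • x + b • y) + B.mulVec (a • u + b • v) + E.mulVec d
        = a • (A.mulVec x + B.mulVec u + E.mulVec d)
          + b • (A.mulVec y + B.mulVec v + E.mulVec d) := by
      rw [Matrix.mulVec_add, Matrix.mulVec_add, Matrix.mulVec_smul, Matrix.mulVec_smul,
        Matrix.mulVec_smul, Matrix.mulVec_smul]
      nth_rewrite 1 [hE]
      simp only [smul_add]
      abel
    rw [this]
    exact hmem

theorem rcis_convexHull_closure {n m l : ℕ} (A : Matrix (Fin n) (Fin n) ℝ)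
    (B : Matrix (Fin n) (Fin m) ℝ) (E : Matrix (Fin n) (Fin l) ℝ)
    (S : Set ((Fin n → ℝ) × (Fin m → ℝ))) (D : Set (Fin l → ℝ))
    (hScvx : Convex ℝ S) (hDcvx : Convex ℝ D)
    (C : Set (Fin n → ℝ)) (hC : C ⊆ Pre A B E C S D) :
    convexHull ℝ C ⊆ Pre A B E (convexHull ℝ C) S D ∧
      (IsCompact S → IsCompact D →
        closure C ⊆ Pre A B E (closure C) S D) := by
  constructor
  · apply convexHull_min
    · exact fun x hx => pre_mono A B E S D (subset_convexHull ℝ C) (hC hx)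
    · exact pre_convex A B E D hScvx (convex_convexHull ℝ C)
  · intro hScomp _ x hx
    obtain ⟨xs, hxs, hlim⟩ := mem_closure_iff_seq_limit.mp hx
    choose us husS hus using fun k => hC (hxs k)
    obtain ⟨p, hpS, φ, hφ, hplim⟩ := hScomp.tendsto_subseq
      (x := fun k => ((xs k, us k) : (Fin n → ℝ) × (Fin m → ℝ))) (fun k => husS k)
    have hx1 : Filter.Tendsto (fun k => xs (φ k)) Filter.atTop (nhds p.1) :=
      (continuous_fst.tendsto p).comp hplim
    have hx1' : Filter.Tendsto (fun k => xs (φ k)) Filter.atTop (nhds x) :=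
      hlim.comp hφ.tendsto_atTop
    have hpx : p.1 = x := tendsto_nhds_unique hx1 hx1'
    refine ⟨p.2, by rwa [← hpx, Prod.mk.eta], ?_⟩
    intro d hd
    have hcont : Continuous fun q : (Fin n → ℝ) × (Fin m → ℝ) =>
        A.mulVec q.1 + B.mulVec q.2 + E.mulVec d := by
      exact ((continuous_const.matrix_mulVec continuous_fst).add
        (continuous_const.matrix_mulVec continuous_snd)).add continuous_const
    have htend := (hcont.tendsto p).comp hplim
    rw [hpx] at htend
    exact mem_closure_of_tendsto htend
      (Filter.Eventually.of_forall fun k => hus (φ k) d hd)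
end
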